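/- arXiv:1604.07354 — 3 statements merged into one kernel-verified Lean document; each statement's English description precedes it below -/
import Mathlib

section
/- Let A and B be bounded positive self-adjoint operators on a Hilbert space H such that 0 ≤ A ≤ λI and 0 ≤ B ≤ λI for some constant λ > 0. Then ‖A^{3/2} − B^{3/2}‖ ≤ 3 λ^{1/2} ‖A − B‖, where ‖·‖ is the operator norm. -/
/-!
For `s ≥ 0` one has `π s^{3/2} = ∫_ℝ s² / (s + u²) du`, so `π (A^{3/2} - B^{3/2})` is the integral
over `u` of `f_c(A) - f_c(B)`, where `f_c(s) = s² / (s + c)` and `c = u²`. With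
`P = A (A + c)⁻¹`, `Q = c (A + c)⁻¹` and `P'`, `Q'` defined likewise from `B`, we have `P + Q = 1`,
`P' + Q' = 1`, `‖P‖, ‖P'‖ ≤ λ / (λ + c)`, `‖Q‖, ‖Q'‖ ≤ 1`, and
`f_c(A) - f_c(B) = P (A - B) P' + P (A - B) Q' + Q (A - B) P'`,
so `‖f_c(A) - f_c(B)‖ ≤ 3 λ ‖A - B‖ / (λ + u²)`. Integrating this bound over `u` gives
`3 π √λ ‖A - B‖`.
-/

open MeasureTheory Real Set

theorem div_add_sq_eq (r : ℝ) {c : ℝ} (hc : 0 < c) (u : ℝ) :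
    r / (c + u ^ 2) = r / c * (1 + (u / √c) ^ 2)⁻¹ := by
  rw [div_pow, sq_sqrt hc.le]
  field_simp

theorem integrable_div_add_sq (r : ℝ) {c : ℝ} (hc : 0 < c) :
    Integrable fun u : ℝ ↦ r / (c + u ^ 2) := by
  simp_rw [div_add_sq_eq r hc]
  exact (integrable_inv_one_add_sq.comp_div (sqrt_pos.2 hc).ne').const_mul _

theorem integral_div_add_sq (r : ℝ) {c : ℝ} (hc : 0 < c) :
    ∫ u : ℝ, r / (c + u ^ 2) = π * r / √c := by
  simp_rw [div_add_sq_eq r hc]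
  rw [integral_const_mul, Measure.integral_comp_div (fun u ↦ (1 + u ^ 2)⁻¹),
    integral_univ_inv_one_add_sq, abs_of_pos (sqrt_pos.2 hc), smul_eq_mul]
  have hsq := sq_sqrt hc.le
  have := (sqrt_pos.2 hc).ne'
  field_simp
  linear_combination r * hsq

theorem integral_sq_div_add_sq {s : ℝ} (hs : 0 ≤ s) :
    ∫ u : ℝ, s ^ 2 / (s + u ^ 2) = π * s ^ (3 / 2 : ℝ) := by
  rcases hs.eq_or_lt with rfl | hs
  · simp
  rw [integral_div_add_sq _ hs, div_eq_iff (sqrt_pos.2 hs).ne', sqrt_eq_rpow, mul_assoc,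
    ← rpow_add hs]
  norm_num

theorem norm_sq_div_add_le {s lam c : ℝ} (hs : s ∈ Icc 0 lam) (hc : 0 ≤ c) :
    ‖s ^ 2 / (s + c)‖ ≤ lam ^ 2 / (lam + c) := by
  obtain ⟨hs0, hslam⟩ := hs
  rw [norm_of_nonneg (by positivity)]
  rcases hs0.eq_or_lt with rfl | hs0
  · rw [zero_pow two_ne_zero, zero_div]
    positivity
  rw [div_le_div_iff₀ (by positivity) (by linarith)]
  nlinarith [mul_nonneg (mul_nonneg hs0.le (hs0.le.trans hslam)) (sub_nonneg.2 hslam),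
    mul_le_mul_of_nonneg_right (pow_le_pow_left₀ hs0.le hslam 2) hc]

theorem continuousOn_sq_div_add_sq :
    ContinuousOn (Function.uncurry fun u s : ℝ ↦ s ^ 2 / (s + u ^ 2)) ({0}ᶜ ×ˢ Ici 0) :=
  ContinuousOn.div (by fun_prop) (by fun_prop) fun p ⟨hu, hs⟩ ↦ by
    have : p.1 ≠ 0 := hu
    have : 0 ≤ p.2 := hs
    positivity

theorem norm_mul_sub_mul_le_of_add_eq_one {R : Type*} [NormedRing R] [Algebra ℝ R]
    {a b p q p' q' : R} {c κ : ℝ} (hpq : p + q = 1) (hpq' : p' + q' = 1)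
    (hqa : q * a = c • p) (hbq : b * q' = c • p')
    (hp : ‖p‖ ≤ κ) (hp' : ‖p'‖ ≤ κ) (hq : ‖q‖ ≤ 1) (hq' : ‖q'‖ ≤ 1) (hκ : κ ≤ 1) :
    ‖p * a - b * p'‖ ≤ 3 * κ * ‖a - b‖ := by
  obtain rfl : q = 1 - p := eq_sub_of_add_eq' hpq
  obtain rfl : q' = 1 - p' := eq_sub_of_add_eq' hpq'
  -- `(1 - p) a p'` and `p b (1 - p')` both equal `c p p'`
  have hcross : (1 - p) * a * p' = p * (b * (1 - p')) := by
    rw [hqa, hbq, smul_mul_assoc, mul_smul_comm]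
  have hexpand : p * a - b * p'
      = p * (a - b) * p' + p * (a - b) * (1 - p') + (1 - p) * (a - b) * p' := by
    rw [← sub_eq_zero, ← sub_eq_zero.2 hcross.symm]
    noncomm_ring
  have hκ0 : 0 ≤ κ := (norm_nonneg p).trans hp
  rw [hexpand]
  calc _ ≤ ‖p‖ * ‖a - b‖ * ‖p'‖ + ‖p‖ * ‖a - b‖ * ‖1 - p'‖ + ‖1 - p‖ * ‖a - b‖ * ‖p'‖ :=
        (norm_add₃_le).trans (by gcongr <;> exact norm_mul₃_le)
    _ ≤ κ * ‖a - b‖ * 1 + κ * ‖a - b‖ * 1 + 1 * ‖a - b‖ * κ := by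
        gcongr; exact hp'.trans hκ
    _ = 3 * κ * ‖a - b‖ := by ring

section CStarAlgebra

variable {𝒜 : Type*} [CStarAlgebra 𝒜] {a : 𝒜} {c lam : ℝ}

theorem spectrum_subset_Icc_of_nonneg_of_le [PartialOrder 𝒜] [StarOrderedRing 𝒜] (ha : 0 ≤ a)
    (hlam : a ≤ algebraMap ℝ 𝒜 lam) : spectrum ℝ a ⊆ Icc 0 lam := fun x hx ↦
  ⟨spectrum_nonneg_of_nonneg ha hx, (le_algebraMap_iff_spectrum_le ha.isSelfAdjoint).1 hlam x hx⟩

theorem cfc_mul_id_eq {f : ℝ → ℝ} (hf : ContinuousOn f (spectrum ℝ a))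
    (ha : IsSelfAdjoint a) : cfc (fun s ↦ f s * s) a = cfc f a * a := by
  rw [cfc_mul f (fun s ↦ s) a hf, cfc_id' ℝ a ha]

theorem cfc_commute_self (f : ℝ → ℝ) (ha : IsSelfAdjoint a) : Commute (cfc f a) a := by
  simpa only [cfc_id' ℝ a ha] using cfc_commute_cfc f (fun s ↦ s) a

theorem continuousOn_div_add (hspec : spectrum ℝ a ⊆ Ici 0) (hc : 0 < c) {f : ℝ → ℝ}
    (hf : Continuous f) : ContinuousOn (fun s ↦ f s / (s + c)) (spectrum ℝ a) :=
  hf.continuousOn.div (by fun_prop) fun s hs ↦ (add_pos_of_nonneg_of_pos (hspec hs) hc).ne'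

theorem cfc_div_add_add_cfc_const_div_add (ha : IsSelfAdjoint a) (hspec : spectrum ℝ a ⊆ Ici 0)
    (hc : 0 < c) : cfc (fun s ↦ s / (s + c)) a + cfc (fun s ↦ c / (s + c)) a = 1 := by
  rw [← cfc_add (a := a) (fun s ↦ s / (s + c)) (fun s ↦ c / (s + c))
    (continuousOn_div_add hspec hc continuous_id') (continuousOn_div_add hspec hc continuous_const),
    ← cfc_one ℝ a ha]
  refine cfc_congr fun s hs ↦ ?_
  have := (add_pos_of_nonneg_of_pos (hspec hs) hc).ne'
  simp only [Pi.one_apply]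
  field_simp

theorem cfc_const_div_add_mul_self (ha : IsSelfAdjoint a) (hspec : spectrum ℝ a ⊆ Ici 0)
    (hc : 0 < c) : cfc (fun s ↦ c / (s + c)) a * a = c • cfc (fun s ↦ s / (s + c)) a := by
  rw [← cfc_mul_id_eq (continuousOn_div_add hspec hc continuous_const) ha,
    ← cfc_smul c _ a (continuousOn_div_add hspec hc continuous_id')]
  exact cfc_congr fun s _ ↦ by simp only [smul_eq_mul]; ring

theorem cfc_sq_div_add_eq (ha : IsSelfAdjoint a) (hspec : spectrum ℝ a ⊆ Ici 0) (hc : 0 < c) :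
    cfc (fun s ↦ s ^ 2 / (s + c)) a = cfc (fun s ↦ s / (s + c)) a * a := by
  rw [← cfc_mul_id_eq (continuousOn_div_add hspec hc continuous_id') ha]
  exact cfc_congr fun s _ ↦ by ring

theorem norm_cfc_div_add_le (hspec : spectrum ℝ a ⊆ Icc 0 lam) (hc : 0 < c) (hlam : 0 ≤ lam) :
    ‖cfc (fun s ↦ s / (s + c)) a‖ ≤ lam / (lam + c) := by
  refine norm_cfc_le (by positivity) fun s hs ↦ ?_
  obtain ⟨hs0, hslam⟩ := hspec hs
  rw [norm_of_nonneg (by positivity), div_le_div_iff₀ (by positivity) (by positivity)]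
  nlinarith

theorem norm_cfc_const_div_add_le (hspec : spectrum ℝ a ⊆ Ici 0) (hc : 0 < c) :
    ‖cfc (fun s ↦ c / (s + c)) a‖ ≤ 1 := by
  refine norm_cfc_le zero_le_one fun s hs ↦ ?_
  have hs0 : 0 ≤ s := hspec hs
  rw [norm_of_nonneg (by positivity), div_le_one (by positivity)]
  linarith

theorem norm_cfc_sq_div_add_sub_le {b : 𝒜} (ha : IsSelfAdjoint a) (hb : IsSelfAdjoint b)
    (hspec_a : spectrum ℝ a ⊆ Icc 0 lam) (hspec_b : spectrum ℝ b ⊆ Icc 0 lam) (hlam : 0 ≤ lam)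
    (hc : 0 < c) :
    ‖cfc (fun s ↦ s ^ 2 / (s + c)) a - cfc (fun s ↦ s ^ 2 / (s + c)) b‖
      ≤ 3 * lam * ‖a - b‖ / (lam + c) := by
  have hspec_a' := hspec_a.trans Icc_subset_Ici_self
  have hspec_b' := hspec_b.trans Icc_subset_Ici_self
  have hbq : b * cfc (fun s ↦ c / (s + c)) b = c • cfc (fun s ↦ s / (s + c)) b := by
    rw [← (cfc_commute_self _ hb).eq, cfc_const_div_add_mul_self hb hspec_b' hc]
  rw [cfc_sq_div_add_eq ha hspec_a' hc, cfc_sq_div_add_eq hb hspec_b' hc,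
    (cfc_commute_self _ hb).eq]
  refine (norm_mul_sub_mul_le_of_add_eq_one (cfc_div_add_add_cfc_const_div_add ha hspec_a' hc)
    (cfc_div_add_add_cfc_const_div_add hb hspec_b' hc) (cfc_const_div_add_mul_self ha hspec_a' hc)
    hbq (norm_cfc_div_add_le hspec_a hc hlam) (norm_cfc_div_add_le hspec_b hc hlam)
    (norm_cfc_const_div_add_le hspec_a' hc) (norm_cfc_const_div_add_le hspec_b' hc)
    (div_le_one_of_le₀ (by linarith) (by positivity))).trans_eq (by ring)

-- The integrand is discontinuous at `(u, s) = (0, 0)`, hence the null set `{0}` of parameters is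
-- removed before commuting the integral with the functional calculus.
theorem pi_smul_cfc_rpow_three_halves_eq_integral (ha : IsSelfAdjoint a)
    (hspec : spectrum ℝ a ⊆ Icc 0 lam) (hlam : 0 < lam) :
    π • cfc (fun x : ℝ ↦ x ^ (3 / 2 : ℝ)) a = ∫ u : ℝ, cfc (fun s ↦ s ^ 2 / (s + u ^ 2)) a := by
  have key := cfc_setIntegral (μ := volume) (measurableSet_singleton 0).compl
    (fun u s : ℝ ↦ s ^ 2 / (s + u ^ 2)) (fun u ↦ lam ^ 2 / (lam + u ^ 2)) a
    (continuousOn_sq_div_add_sq.mono (prod_mono subset_rfl (hspec.trans Icc_subset_Ici_self)))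
    (ae_of_all _ fun u s hs ↦ norm_sq_div_add_le (hspec hs) (sq_nonneg u))
    (by rw [restrict_compl_singleton]
        exact (integrable_div_add_sq _ hlam).hasFiniteIntegral) ha
  rw [restrict_compl_singleton] at key
  rw [← key, ← cfc_const_mul π _ a (continuous_rpow_const (by norm_num)).continuousOn]
  exact cfc_congr fun s hs ↦ (integral_sq_div_add_sq (hspec hs).1).symm

theorem integrable_cfc_sq_div_add_sq (ha : IsSelfAdjoint a) (hspec : spectrum ℝ a ⊆ Icc 0 lam)
    (hlam : 0 < lam) : Integrable fun u : ℝ ↦ cfc (fun s ↦ s ^ 2 / (s + u ^ 2)) a := by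
  have key := integrableOn_cfc (μ := volume) (measurableSet_singleton 0).compl
    (fun u s : ℝ ↦ s ^ 2 / (s + u ^ 2)) (fun u ↦ lam ^ 2 / (lam + u ^ 2)) a
    (continuousOn_sq_div_add_sq.mono (prod_mono subset_rfl (hspec.trans Icc_subset_Ici_self)))
    (ae_of_all _ fun u s hs ↦ norm_sq_div_add_le (hspec hs) (sq_nonneg u))
    (by rw [restrict_compl_singleton]
        exact (integrable_div_add_sq _ hlam).hasFiniteIntegral) ha
  rwa [IntegrableOn, restrict_compl_singleton] at key

theorem norm_cfc_rpow_three_halves_sub_le {b : 𝒜} (ha : IsSelfAdjoint a) (hb : IsSelfAdjoint b)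
    (hspec_a : spectrum ℝ a ⊆ Icc 0 lam) (hspec_b : spectrum ℝ b ⊆ Icc 0 lam) (hlam : 0 < lam) :
    ‖cfc (fun x : ℝ ↦ x ^ (3 / 2 : ℝ)) a - cfc (fun x : ℝ ↦ x ^ (3 / 2 : ℝ)) b‖
      ≤ 3 * √lam * ‖a - b‖ := by
  have hrep : π • (cfc (fun x : ℝ ↦ x ^ (3 / 2 : ℝ)) a - cfc (fun x : ℝ ↦ x ^ (3 / 2 : ℝ)) b)
      = ∫ u : ℝ, (cfc (fun s ↦ s ^ 2 / (s + u ^ 2)) a - cfc (fun s ↦ s ^ 2 / (s + u ^ 2)) b) := by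
    rw [smul_sub, pi_smul_cfc_rpow_three_halves_eq_integral ha hspec_a hlam,
      pi_smul_cfc_rpow_three_halves_eq_integral hb hspec_b hlam,
      integral_sub (integrable_cfc_sq_div_add_sq ha hspec_a hlam)
        (integrable_cfc_sq_div_add_sq hb hspec_b hlam)]
  have hle := norm_integral_le_of_norm_le (integrable_div_add_sq (3 * lam * ‖a - b‖) hlam)
    ((Measure.ae_ne volume 0).mono fun u hu ↦
      norm_cfc_sq_div_add_sub_le ha hb hspec_a hspec_b hlam.le (c := u ^ 2) (by positivity))
  rw [← hrep, norm_smul, norm_of_nonneg pi_pos.le, integral_div_add_sq _ hlam] at hle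
  refine le_of_mul_le_mul_left (hle.trans_eq ?_) pi_pos
  have hsq := sq_sqrt hlam.le
  field_simp
  linear_combination -‖a - b‖ * hsq

end CStarAlgebra

/-- Lemma 1 of the paper, from Fukumizu et al. 2007.
If `A` and `B` are bounded positive self-adjoint operators on a Hilbert space `H`
with `0 ≤ A ≤ λ·I` and `0 ≤ B ≤ λ·I` for a constant `λ > 0`, then
`‖A^{3/2} − B^{3/2}‖ ≤ 3 λ^{1/2} ‖A − B‖`, powers taken via the continuous
functional calculus. -/
theorem stmt0 {H : Type*} [NormedAddCommGroup H] [InnerProductSpace ℂ H] [CompleteSpace H]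
    (A B : H →L[ℂ] H) (lam : ℝ) (hlam : 0 < lam)
    (hA : A.IsPositive) (hB : B.IsPositive)
    (hAlam : (lam • (1 : H →L[ℂ] H) - A).IsPositive)
    (hBlam : (lam • (1 : H →L[ℂ] H) - B).IsPositive) :
    ‖cfc (fun x : ℝ => x ^ (3 / 2 : ℝ)) A - cfc (fun x : ℝ => x ^ (3 / 2 : ℝ)) B‖ ≤
      3 * lam ^ (1 / 2 : ℝ) * ‖A - B‖ := by
  have hspec : ∀ T : H →L[ℂ] H, T.IsPositive → (lam • (1 : H →L[ℂ] H) - T).IsPositive →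
      spectrum ℝ T ⊆ Icc 0 lam := fun T hT hTlam ↦
    spectrum_subset_Icc_of_nonneg_of_le ((ContinuousLinearMap.nonneg_iff_isPositive T).2 hT)
      (by rwa [Algebra.algebraMap_eq_smul_one])
  rw [← sqrt_eq_rpow]
  exact norm_cfc_rpow_three_halves_sub_le hA.isSelfAdjoint hB.isSelfAdjoint
    (hspec A hA hAlam) (hspec B hB hBlam) hlam
end

section
/- Let A and B be bounded positive self-adjoint operators on a Hilbert space H with 0 ≤ A ≤ λI and 0 ≤ B ≤ λI for some λ > 0, and let ε > 0. Then ‖(A + εI)^{-1/2} − (B + εI)^{-1/2}‖ ≤ ε^{-3/2} (3 ε^{-1/2} (λ + ε)^{1/2} + 1) ‖A − B‖. -/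
/-! If `a, b ≥ ε`, then `a - b ≤ ‖a - b‖ ≤ u • b` with `u = ‖a - b‖ / ε`, so `a ≤ (1 + u) • b`.
For `0 < p ≤ 1` the map `x ↦ x ^ (-p)` is operator antitone (`x ^ p` is operator monotone and
the inverse is operator antitone) and homogeneous, hence `(1 + u) ^ (-p) • b ^ (-p) ≤ a ^ (-p)`
and `b ^ (-p) - a ^ (-p) ≤ (1 - (1 + u) ^ (-p)) ε ^ (-p) ≤ p u ε ^ (-p)` by Bernoulli's
inequality. By symmetry `‖a ^ (-p) - b ^ (-p)‖ ≤ p ε ^ (-(p + 1)) ‖a - b‖`; for `p = 1/2` this is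
`ε ^ (-3/2) ‖A - B‖ / 2`, below the claimed bound. -/

open CFC Set

theorem Real.one_sub_rpow_neg_le {u p : ℝ} (hu : 0 ≤ u) (hp₀ : 0 ≤ p) (hp₁ : p ≤ 1) :
    1 - (1 + u) ^ (-p) ≤ p * u := by
  have hpow : (1 + u) ^ p ≤ 1 + p * u := rpow_one_add_le_one_add_mul_self (by linarith) hp₀ hp₁
  have hinv : 1 / (1 + p * u) ≤ (1 + u) ^ (-p) := by
    rw [Real.rpow_neg (by linarith), ← one_div]
    exact one_div_le_one_div_of_le (Real.rpow_pos_of_pos (by linarith) p) hpow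
  have hpu : 1 - p * u ≤ 1 / (1 + p * u) := by
    rw [le_div_iff₀ (by positivity)]
    nlinarith [mul_nonneg hp₀ hu]
  linarith

section CStarAlgebra

variable {A : Type*} [CStarAlgebra A] [PartialOrder A] [StarOrderedRing A]

theorem IsSelfAdjoint.norm_le_of_le_of_neg_le {a : A} (ha : IsSelfAdjoint a) {r : ℝ} (hr : 0 ≤ r)
    (h₁ : a ≤ algebraMap ℝ A r) (h₂ : -a ≤ algebraMap ℝ A r) : ‖a‖ ≤ r := by
  rcases subsingleton_or_nontrivial A with _ | _
  · simpa [Subsingleton.elim a 0] using hr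
  rw [neg_le, ← map_neg, algebraMap_le_iff_le_spectrum] at h₂
  rw [le_algebraMap_iff_spectrum_le] at h₁
  rcases CStarAlgebra.norm_or_neg_norm_mem_spectrum ha with h | h
  · exact h₁ _ h
  · linarith [h₂ _ h]

namespace CFC

theorem rpow_neg_le_rpow_neg {p : ℝ} (hp : p ∈ Ioc 0 1) {a b : A} (hab : a ≤ b)
    (ha : IsStrictlyPositive a) : b ^ (-p) ≤ a ^ (-p) := by
  rw [← inverse_rpow a p hp.1.ne', ← inverse_rpow b p hp.1.ne' (ha.of_le hab)]
  exact CStarAlgebra.ringInverse_le_ringInverse (rpow_le_rpow ⟨hp.1.le, hp.2⟩ hab)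
    (IsStrictlyPositive.rpow a p ha)

theorem smul_rpow {c : ℝ} (hc : 0 < c) {a : A} (ha : IsStrictlyPositive a) (y : ℝ) :
    (c • a) ^ y = c ^ y • a ^ y := by
  have hspec : ∀ x ∈ spectrum ℝ a, 0 < x := fun x hx => ha.spectrum_pos hx
  have hcont : ContinuousOn (· ^ y) (spectrum ℝ a) :=
    ContinuousOn.rpow_const continuousOn_id fun x hx => Or.inl (hspec x hx).ne'
  have hcont' : ContinuousOn (· ^ y) ((c * ·) '' spectrum ℝ a) := by
    rintro _ ⟨x, hx, rfl⟩
    exact (Real.continuousAt_rpow_const _ _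
      (Or.inl (mul_pos hc (hspec x hx)).ne')).continuousWithinAt
  rw [rpow_eq_cfc_real (smul_nonneg hc.le ha.nonneg), rpow_eq_cfc_real ha.nonneg,
    ← cfc_comp_const_mul c _ a hcont', ← cfc_const_mul (c ^ y) _ a hcont]
  exact cfc_congr fun x hx => Real.mul_rpow hc.le (hspec x hx).le

theorem rpow_neg_le_algebraMap {ε p : ℝ} (hε : 0 < ε) (hp : 0 ≤ p) {a : A}
    (ha : algebraMap ℝ A ε ≤ a) : a ^ (-p) ≤ algebraMap ℝ A (ε ^ (-p)) := by
  have ha₀ : 0 ≤ a := (isStrictlyPositive_algebraMap hε).nonneg.trans ha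
  have hspec := (algebraMap_le_iff_le_spectrum (IsSelfAdjoint.of_nonneg ha₀)).mp ha
  rw [rpow_eq_cfc_real ha₀]
  refine cfc_le_algebraMap _ _ a (fun x hx =>
    Real.rpow_le_rpow_of_nonpos hε (hspec x hx) (neg_nonpos.mpr hp)) ?_
  exact ContinuousOn.rpow_const continuousOn_id fun x hx => Or.inl (hε.trans_le (hspec x hx)).ne'

theorem ringInverse_cfc_rpow {a : A} (ha : IsStrictlyPositive a) {y : ℝ} (hy : y ≠ 0) :
    Ring.inverse (cfc (fun x : ℝ => x ^ y) a) = a ^ (-y) := by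
  rw [← rpow_eq_cfc_real ha.nonneg, inverse_rpow a y hy]

end CFC

theorem le_one_add_norm_sub_div_smul {ε : ℝ} (hε : 0 < ε) {a b : A} (ha : IsSelfAdjoint a)
    (hb : algebraMap ℝ A ε ≤ b) : a ≤ (1 + ‖a - b‖ / ε) • b := by
  have hb₀ : 0 ≤ b := (isStrictlyPositive_algebraMap hε).nonneg.trans hb
  calc a = b + (a - b) := by abel
    _ ≤ b + algebraMap ℝ A ‖a - b‖ := by
      gcongr
      exact IsSelfAdjoint.le_algebraMap_norm_self (ha.sub (.of_nonneg hb₀))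
    _ = b + (‖a - b‖ / ε) • algebraMap ℝ A ε := by
      rw [Algebra.smul_def, ← map_mul, div_mul_cancel₀ _ hε.ne']
    _ ≤ b + (‖a - b‖ / ε) • b := by gcongr
    _ = (1 + ‖a - b‖ / ε) • b := by rw [add_smul, one_smul]

theorem rpow_neg_sub_rpow_neg_le {p ε : ℝ} (hp : p ∈ Ioc 0 1) (hε : 0 < ε) {a b : A}
    (ha : algebraMap ℝ A ε ≤ a) (hb : algebraMap ℝ A ε ≤ b) :
    b ^ (-p) - a ^ (-p) ≤ algebraMap ℝ A (p * ε ^ (-(p + 1)) * ‖a - b‖) := by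
  have hε' := isStrictlyPositive_algebraMap (A := A) hε
  set u := ‖a - b‖ / ε
  have hu : 0 ≤ u := by positivity
  have hscale : (1 + u) ^ (-p) • b ^ (-p) ≤ a ^ (-p) := by
    rw [← smul_rpow (by positivity) (hε'.of_le hb)]
    exact rpow_neg_le_rpow_neg hp
      (le_one_add_norm_sub_div_smul hε (.of_nonneg (hε'.nonneg.trans ha)) hb) (hε'.of_le ha)
  have hcoef : 0 ≤ 1 - (1 + u) ^ (-p) :=
    sub_nonneg.mpr (Real.rpow_le_one_of_one_le_of_nonpos (by linarith) (by linarith [hp.1]))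
  calc b ^ (-p) - a ^ (-p) ≤ b ^ (-p) - (1 + u) ^ (-p) • b ^ (-p) := sub_le_sub_left hscale _
    _ = (1 - (1 + u) ^ (-p)) • b ^ (-p) := by rw [sub_smul, one_smul]
    _ ≤ (1 - (1 + u) ^ (-p)) • algebraMap ℝ A (ε ^ (-p)) :=
      smul_le_smul_of_nonneg_left (rpow_neg_le_algebraMap hε hp.1.le hb) hcoef
    _ ≤ (p * u) • algebraMap ℝ A (ε ^ (-p)) :=
      smul_le_smul_of_nonneg_right (Real.one_sub_rpow_neg_le hu hp.1.le hp.2)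
        (isStrictlyPositive_algebraMap (Real.rpow_pos_of_pos hε _)).nonneg
    _ = algebraMap ℝ A (p * ε ^ (-(p + 1)) * ‖a - b‖) := by
      rw [Algebra.smul_def, ← map_mul, neg_add, Real.rpow_add hε, Real.rpow_neg_one]
      congr 1
      simp only [u]
      ring

theorem norm_rpow_neg_sub_rpow_neg_le {p ε : ℝ} (hp : p ∈ Ioc 0 1) (hε : 0 < ε) {a b : A}
    (ha : algebraMap ℝ A ε ≤ a) (hb : algebraMap ℝ A ε ≤ b) :
    ‖a ^ (-p) - b ^ (-p)‖ ≤ p * ε ^ (-(p + 1)) * ‖a - b‖ := by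
  refine IsSelfAdjoint.norm_le_of_le_of_neg_le ((IsSelfAdjoint.of_nonneg rpow_nonneg).sub
    (.of_nonneg rpow_nonneg)) (by have hp₀ := hp.1; positivity) ?_ ?_
  · rw [norm_sub_rev]
    exact rpow_neg_sub_rpow_neg_le hp hε hb ha
  · rw [neg_sub]
    exact rpow_neg_sub_rpow_neg_le hp hε ha hb

end CStarAlgebra

theorem stmt3_general {H : Type*} [NormedAddCommGroup H] [InnerProductSpace ℂ H] [CompleteSpace H]
    (A B : H →L[ℂ] H) (lam : ℝ) (hlam : 0 < lam)
    (hA : A.IsPositive) (hB : B.IsPositive)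
    (ε : ℝ) (hε : 0 < ε) :
    ‖Ring.inverse (cfc (fun x : ℝ => x ^ (1 / 2 : ℝ)) (A + ε • (1 : H →L[ℂ] H))) -
        Ring.inverse (cfc (fun x : ℝ => x ^ (1 / 2 : ℝ)) (B + ε • (1 : H →L[ℂ] H)))‖ ≤
      ε ^ (-(3 / 2) : ℝ) * (3 * ε ^ (-(1 / 2) : ℝ) * (lam + ε) ^ (1 / 2 : ℝ) + 1) *
        ‖A - B‖ := by
  have hshift : ∀ C : H →L[ℂ] H, C.IsPositive →
      algebraMap ℝ (H →L[ℂ] H) ε ≤ C + ε • (1 : H →L[ℂ] H) := fun C hC => by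
    rw [Algebra.algebraMap_eq_smul_one]
    exact le_add_of_nonneg_left ((ContinuousLinearMap.nonneg_iff_isPositive C).mpr hC)
  have hε' := isStrictlyPositive_algebraMap (A := H →L[ℂ] H) hε
  have hbound := norm_rpow_neg_sub_rpow_neg_le (p := 1 / 2) ⟨by norm_num, by norm_num⟩ hε
    (hshift A hA) (hshift B hB)
  rw [add_sub_add_right_eq_sub, show -(1 / 2 + 1 : ℝ) = -(3 / 2) by norm_num] at hbound
  rw [CFC.ringInverse_cfc_rpow (hε'.of_le (hshift A hA)) (by norm_num),
    CFC.ringInverse_cfc_rpow (hε'.of_le (hshift B hB)) (by norm_num)]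
  refine hbound.trans ?_
  have hN : 0 ≤ 3 * ε ^ (-(1 / 2) : ℝ) * (lam + ε) ^ (1 / 2 : ℝ) := by positivity
  have hX : 0 ≤ ε ^ (-(3 / 2) : ℝ) * ‖A - B‖ := by positivity
  nlinarith [mul_nonneg hX hN]

/-- perturbation bound for regularized inverse square roots, used in the
proof of Theorem 2 of the paper. For bounded positive self-adjoint operators
`0 ≤ A ≤ λI`, `0 ≤ B ≤ λI` and `ε > 0`,
`‖(A + εI)^{-1/2} − (B + εI)^{-1/2}‖ ≤ ε^{-3/2}(3 ε^{-1/2}(λ + ε)^{1/2} + 1)‖A − B‖`,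
where `(A + εI)^{-1/2} := ((A + εI)^{1/2})⁻¹` via the continuous functional calculus
(formalized with `Ring.inverse`). -/
theorem stmt3 {H : Type*} [NormedAddCommGroup H] [InnerProductSpace ℂ H] [CompleteSpace H]
    (A B : H →L[ℂ] H) (lam : ℝ) (hlam : 0 < lam)
    (hA : A.IsPositive) (hB : B.IsPositive)
    (hAlam : (lam • (1 : H →L[ℂ] H) - A).IsPositive)
    (hBlam : (lam • (1 : H →L[ℂ] H) - B).IsPositive)
    (ε : ℝ) (hε : 0 < ε) :
    ‖Ring.inverse (cfc (fun x : ℝ => x ^ (1 / 2 : ℝ)) (A + ε • (1 : H →L[ℂ] H))) -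
        Ring.inverse (cfc (fun x : ℝ => x ^ (1 / 2 : ℝ)) (B + ε • (1 : H →L[ℂ] H)))‖ ≤
      ε ^ (-(3 / 2) : ℝ) * (3 * ε ^ (-(1 / 2) : ℝ) * (lam + ε) ^ (1 / 2 : ℝ) + 1) *
        ‖A - B‖ :=
  stmt3_general A B lam hlam hA hB ε hε
end

section
/- Let H₁ and H₂ be Hilbert spaces, let λ > 0, M > 0 and ε > 0. Let A and Â be bounded positive self-adjoint operators on H₂ with 0 ≤ A ≤ λI and 0 ≤ Â ≤ λI, let B and B̂ be bounded positive self-adjoint operators on H₁ with 0 ≤ B ≤ λI and 0 ≤ B̂ ≤ λI, and let S, Ŝ : H₁ → H₂ be bounded operators with ‖S‖ ≤ M and ‖Ŝ‖ ≤ M. Then ‖(Â + εI)^{-1/2} Ŝ (B̂ + εI)^{-1/2} − (A + εI)^{-1/2} S (B + εI)^{-1/2}‖ ≤ M ε^{-2} (3 ε^{-1/2} (λ + ε)^{1/2} + 1) (‖Â − A‖ + ‖B̂ − B‖) + ε^{-1} ‖Ŝ − S‖. -/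
/-!
Write `T̂ = Â + ε`, `T = A + ε`, so that both are `≥ ε`. Since the square root is operator
monotone, `T̂ ≤ T + ‖T̂ - T‖` gives `√T̂ ≤ √(T + ‖T̂ - T‖) ≤ √T + ‖T̂ - T‖ / (2√ε)`, the last step
because `(√T + c)² ≥ T + 2c√ε`. By symmetry `‖√T̂ - √T‖ ≤ ‖T̂ - T‖ / (2√ε)`, and the resolvent-type
identity `u⁻¹ - v⁻¹ = u⁻¹ (v - u) v⁻¹` with `‖(√T)⁻¹‖ ≤ ε^{-1/2}` yields
`‖T̂^{-1/2} - T^{-1/2}‖ ≤ ‖Â - A‖ / (2 ε^{3/2})`. Expanding the difference of triple products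
telescopically then gives `M ε^{-2} (‖Â - A‖ + ‖B̂ - B‖) / 2 + ε⁻¹ ‖Ŝ - S‖`, which is below the
claimed bound.
-/

/-- The regularized inverse square root `(A + εI)^{-1/2} := ((A + εI)^{1/2})⁻¹` of a
bounded operator on a Hilbert space, with the square root given by the continuous
functional calculus and the inverse by `Ring.inverse`. -/
noncomputable def regInvSqrt {H : Type*} [NormedAddCommGroup H] [InnerProductSpace ℂ H]
    [CompleteSpace H] (A : H →L[ℂ] H) (ε : ℝ) : H →L[ℂ] H :=
  Ring.inverse (cfc (fun x : ℝ => x ^ (1 / 2 : ℝ)) (A + ε • (1 : H →L[ℂ] H)))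

open CFC Ring

lemma Ring.inverse_algebraMap {R A : Type*} [Field R] [Ring A] [Algebra R A] {s : R}
    (hs : s ≠ 0) : (algebraMap R A s)⁻¹ʳ = algebraMap R A s⁻¹ := by
  have hu : IsUnit (algebraMap R A s) := (isUnit_iff_ne_zero.mpr hs).map _
  rw [← mul_one (algebraMap R A s)⁻¹ʳ, inverse_mul_eq_iff_eq_mul _ _ _ hu, ← map_mul,
    mul_inv_cancel₀ hs, map_one]

lemma ContinuousLinearMap.opNorm_comp_comp_le {𝕜 D E F G : Type*}
    [NontriviallyNormedField 𝕜] [SeminormedAddCommGroup D] [SeminormedAddCommGroup E]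
    [SeminormedAddCommGroup F] [SeminormedAddCommGroup G] [NormedSpace 𝕜 D] [NormedSpace 𝕜 E]
    [NormedSpace 𝕜 F] [NormedSpace 𝕜 G] (f : F →L[𝕜] G) (g : E →L[𝕜] F) (h : D →L[𝕜] E) :
    ‖f ∘L g ∘L h‖ ≤ ‖f‖ * ‖g‖ * ‖h‖ := by
  grw [opNorm_comp_le, opNorm_comp_le, mul_assoc]

lemma ContinuousLinearMap.norm_comp_comp_sub_comp_comp_le {𝕜 D E F G : Type*}
    [NontriviallyNormedField 𝕜] [SeminormedAddCommGroup D] [SeminormedAddCommGroup E]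
    [SeminormedAddCommGroup F] [SeminormedAddCommGroup G] [NormedSpace 𝕜 D] [NormedSpace 𝕜 E]
    [NormedSpace 𝕜 F] [NormedSpace 𝕜 G] (P P' : F →L[𝕜] G) (S S' : E →L[𝕜] F)
    (Q Q' : D →L[𝕜] E) {p s q : ℝ} (hP : ‖P‖ ≤ p) (hS : ‖S‖ ≤ s) (hS' : ‖S'‖ ≤ s)
    (hQ' : ‖Q'‖ ≤ q) :
    ‖P' ∘L S' ∘L Q' - P ∘L S ∘L Q‖ ≤
      ‖P' - P‖ * s * q + p * ‖S' - S‖ * q + p * s * ‖Q' - Q‖ := by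
  have hp : 0 ≤ p := (norm_nonneg _).trans hP
  have hs : 0 ≤ s := (norm_nonneg _).trans hS
  have htelescope : P' ∘L S' ∘L Q' - P ∘L S ∘L Q =
      (P' - P) ∘L S' ∘L Q' + P ∘L (S' - S) ∘L Q' + P ∘L S ∘L (Q' - Q) := by
    ext x
    simp only [sub_apply, add_apply, comp_apply, map_sub]
    abel
  rw [htelescope]
  refine (norm_add₃_le ..).trans (add_le_add (add_le_add ?_ ?_) ?_) <;>
    exact (opNorm_comp_comp_le _ _ _).trans (by gcongr)

namespace CStarAlgebra

variable {A : Type*} [CStarAlgebra A] [PartialOrder A] [StarOrderedRing A]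

lemma norm_le_of_neg_algebraMap_le_of_le_algebraMap {x : A} {c : ℝ} (hc : 0 ≤ c)
    (hx : IsSelfAdjoint x) (hlo : algebraMap ℝ A (-c) ≤ x) (hhi : x ≤ algebraMap ℝ A c) :
    ‖x‖ ≤ c := by
  rw [← cfc_id' ℝ x]
  refine norm_cfc_le hc fun y hy => abs_le.mpr ⟨?_, ?_⟩
  · exact (algebraMap_le_iff_le_spectrum hx).mp hlo y hy
  · exact (le_algebraMap_iff_spectrum_le hx).mp hhi y hy

lemma norm_ringInverse_le_of_algebraMap_le {a : A} {s : ℝ} (hs : 0 < s)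
    (ha : algebraMap ℝ A s ≤ a) : ‖a⁻¹ʳ‖ ≤ s⁻¹ := by
  have ha' : IsStrictlyPositive a := (isStrictlyPositive_algebraMap hs).of_le ha
  refine (norm_le_iff_le_algebraMap _ (inv_nonneg.mpr hs.le) ha'.ringInverse.nonneg).mpr ?_
  rw [← Ring.inverse_algebraMap hs.ne']
  exact ringInverse_le_ringInverse ha

lemma algebraMap_sqrt_le_sqrt {a : A} {ε : ℝ} (hε : 0 ≤ ε) (ha : algebraMap ℝ A ε ≤ a) :
    algebraMap ℝ A √ε ≤ sqrt a := by
  have hsq : algebraMap ℝ A ε = (algebraMap ℝ A √ε) ^ 2 := by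
    rw [← map_pow, Real.sq_sqrt hε]
  calc algebraMap ℝ A √ε = sqrt (algebraMap ℝ A ε) := by
        rw [hsq, sqrt_sq _ (algebraMap_nonneg A (Real.sqrt_nonneg ε))]
    _ ≤ sqrt a := sqrt_le_sqrt _ _ ha

lemma sqrt_le_sqrt_add_algebraMap {a b : A} {ε δ : ℝ} (hε : 0 < ε) (hδ : 0 ≤ δ)
    (hb : algebraMap ℝ A ε ≤ b) (hab : a ≤ b + algebraMap ℝ A δ) :
    sqrt a ≤ sqrt b + algebraMap ℝ A (δ / (2 * √ε)) := by
  set c := δ / (2 * √ε)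
  have hc : 0 ≤ c := by positivity
  have hsq : (sqrt b + algebraMap ℝ A c) ^ 2
      = b + (2 * c) • sqrt b + algebraMap ℝ A (c ^ 2) := by
    have hb0 : 0 ≤ b := (algebraMap_nonneg A hε.le).trans hb
    rw [sq, add_mul, mul_add, mul_add, sqrt_mul_sqrt_self b, ← Algebra.commutes, ← map_mul,
      ← Algebra.smul_def, two_mul, add_smul, sq]
    abel
  have hle : b + algebraMap ℝ A δ ≤ (sqrt b + algebraMap ℝ A c) ^ 2 := by
    have hδ : δ = 2 * c * √ε := by
      simp only [c]; field_simp
    calc b + algebraMap ℝ A δ = b + (2 * c) • algebraMap ℝ A √ε + 0 := by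
          rw [add_zero, Algebra.smul_def, ← map_mul, hδ]
      _ ≤ b + (2 * c) • sqrt b + algebraMap ℝ A (c ^ 2) := by
          gcongr
          · exact algebraMap_sqrt_le_sqrt hε.le hb
          · exact algebraMap_nonneg A (sq_nonneg c)
      _ = _ := hsq.symm
  calc sqrt a ≤ sqrt ((sqrt b + algebraMap ℝ A c) ^ 2) := sqrt_le_sqrt _ _ (hab.trans hle)
    _ = sqrt b + algebraMap ℝ A c :=
      sqrt_sq _ (add_nonneg (sqrt_nonneg b) (algebraMap_nonneg A hc))

lemma norm_sqrt_sub_sqrt_le {a b : A} {ε : ℝ} (hε : 0 < ε)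
    (ha : algebraMap ℝ A ε ≤ a) (hb : algebraMap ℝ A ε ≤ b) :
    ‖sqrt a - sqrt b‖ ≤ ‖a - b‖ / (2 * √ε) := by
  have hε0 : (0 : A) ≤ algebraMap ℝ A ε := algebraMap_nonneg A hε.le
  have hsa : IsSelfAdjoint (a - b) :=
    (IsSelfAdjoint.of_nonneg (hε0.trans ha)).sub (IsSelfAdjoint.of_nonneg (hε0.trans hb))
  have hab : a ≤ b + algebraMap ℝ A ‖a - b‖ := sub_le_iff_le_add'.mp hsa.le_algebraMap_norm_self
  have hba : b ≤ a + algebraMap ℝ A ‖a - b‖ :=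
    neg_le_sub_iff_le_add.mp hsa.neg_algebraMap_norm_le_self
  refine norm_le_of_neg_algebraMap_le_of_le_algebraMap (by positivity)
    ((IsSelfAdjoint.of_nonneg (sqrt_nonneg a)).sub (IsSelfAdjoint.of_nonneg (sqrt_nonneg b)))
    ?_ ?_
  · rw [map_neg]
    exact neg_le_sub_iff_le_add.mpr (sqrt_le_sqrt_add_algebraMap hε (norm_nonneg _) ha hba)
  · exact sub_le_iff_le_add'.mpr (sqrt_le_sqrt_add_algebraMap hε (norm_nonneg _) hb hab)

lemma norm_ringInverse_sqrt_le {a : A} {ε : ℝ} (hε : 0 < ε) (ha : algebraMap ℝ A ε ≤ a) :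
    ‖(sqrt a)⁻¹ʳ‖ ≤ (√ε)⁻¹ :=
  norm_ringInverse_le_of_algebraMap_le (Real.sqrt_pos.mpr hε) (algebraMap_sqrt_le_sqrt hε.le ha)

lemma norm_ringInverse_sqrt_sub_le {a b : A} {ε : ℝ} (hε : 0 < ε)
    (ha : algebraMap ℝ A ε ≤ a) (hb : algebraMap ℝ A ε ≤ b) :
    ‖(sqrt a)⁻¹ʳ - (sqrt b)⁻¹ʳ‖ ≤ ‖a - b‖ / (2 * ε * √ε) := by
  have hunit {c : A} (hc : algebraMap ℝ A ε ≤ c) : IsUnit (sqrt c) :=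
    ((isStrictlyPositive_algebraMap (Real.sqrt_pos.mpr hε)).of_le
      (algebraMap_sqrt_le_sqrt hε.le hc)).isUnit
  rw [inverse_sub_inverse (iff_of_true (hunit ha) (hunit hb))]
  calc ‖(sqrt a)⁻¹ʳ * (sqrt b - sqrt a) * (sqrt b)⁻¹ʳ‖
      ≤ (√ε)⁻¹ * (‖a - b‖ / (2 * √ε)) * (√ε)⁻¹ := by
        refine (norm_mul₃_le ..).trans ?_
        gcongr
        · exact norm_ringInverse_sqrt_le hε ha
        · rw [norm_sub_rev]; exact norm_sqrt_sub_sqrt_le hε ha hb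
        · exact norm_ringInverse_sqrt_le hε hb
    _ = ‖a - b‖ / (2 * ε * √ε) := by
        field_simp
        rw [Real.sq_sqrt hε.le]
        ring

end CStarAlgebra

section regInvSqrt

open CStarAlgebra

variable {H : Type*} [NormedAddCommGroup H] [InnerProductSpace ℂ H] [CompleteSpace H]
  {T T' : H →L[ℂ] H} {ε : ℝ}

lemma regInvSqrt_eq_ringInverse_sqrt (hT : T.IsPositive) (hε : 0 ≤ ε) :
    regInvSqrt T ε = (sqrt (T + algebraMap ℝ _ ε))⁻¹ʳ := by
  have h0 : 0 ≤ T + algebraMap ℝ _ ε :=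
    add_nonneg ((T.nonneg_iff_isPositive).mpr hT) (algebraMap_nonneg _ hε)
  rw [regInvSqrt, ← Algebra.algebraMap_eq_smul_one, sqrt_eq_rpow, rpow_eq_cfc_real h0]

lemma ContinuousLinearMap.IsPositive.algebraMap_le_add_algebraMap (hT : T.IsPositive) :
    algebraMap ℝ (H →L[ℂ] H) ε ≤ T + algebraMap ℝ _ ε :=
  le_add_of_nonneg_left ((T.nonneg_iff_isPositive).mpr hT)

lemma norm_regInvSqrt_le (hT : T.IsPositive) (hε : 0 < ε) : ‖regInvSqrt T ε‖ ≤ (√ε)⁻¹ := by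
  rw [regInvSqrt_eq_ringInverse_sqrt hT hε.le]
  exact norm_ringInverse_sqrt_le hε hT.algebraMap_le_add_algebraMap

lemma norm_regInvSqrt_sub_le (hT : T.IsPositive) (hT' : T'.IsPositive) (hε : 0 < ε) :
    ‖regInvSqrt T' ε - regInvSqrt T ε‖ ≤ ‖T' - T‖ / (2 * ε * √ε) := by
  rw [regInvSqrt_eq_ringInverse_sqrt hT hε.le, regInvSqrt_eq_ringInverse_sqrt hT' hε.le,
    ← add_sub_add_right_eq_sub T' T (algebraMap ℝ _ ε)]
  exact norm_ringInverse_sqrt_sub_le hε hT'.algebraMap_le_add_algebraMap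
    hT.algebraMap_le_add_algebraMap

end regInvSqrt

theorem stmt5_general {H₁ H₂ : Type*}
    [NormedAddCommGroup H₁] [InnerProductSpace ℂ H₁] [CompleteSpace H₁]
    [NormedAddCommGroup H₂] [InnerProductSpace ℂ H₂] [CompleteSpace H₂]
    (lam M ε : ℝ) (hlam : 0 < lam) (hε : 0 < ε)
    (A Ahat : H₂ →L[ℂ] H₂) (hA : A.IsPositive) (hAhat : Ahat.IsPositive)
    (B Bhat : H₁ →L[ℂ] H₁) (hB : B.IsPositive) (hBhat : Bhat.IsPositive)
    (S Shat : H₁ →L[ℂ] H₂) (hS : ‖S‖ ≤ M) (hShat : ‖Shat‖ ≤ M) :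
    ‖regInvSqrt Ahat ε ∘L Shat ∘L regInvSqrt Bhat ε -
        regInvSqrt A ε ∘L S ∘L regInvSqrt B ε‖ ≤
      M * ε ^ (-(2 : ℝ)) * (3 * ε ^ (-(1 / 2) : ℝ) * (lam + ε) ^ (1 / 2 : ℝ) + 1) *
          (‖Ahat - A‖ + ‖Bhat - B‖) +
        ε⁻¹ * ‖Shat - S‖ := by
  have hM : 0 ≤ M := (norm_nonneg S).trans hS
  have hsqrt : (√ε)⁻¹ * (√ε)⁻¹ = ε⁻¹ := by rw [← mul_inv, Real.mul_self_sqrt hε.le]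
  calc _ ≤ ‖regInvSqrt Ahat ε - regInvSqrt A ε‖ * M * (√ε)⁻¹
          + (√ε)⁻¹ * ‖Shat - S‖ * (√ε)⁻¹ + (√ε)⁻¹ * M * ‖regInvSqrt Bhat ε - regInvSqrt B ε‖ :=
        ContinuousLinearMap.norm_comp_comp_sub_comp_comp_le _ _ _ _ _ _
          (norm_regInvSqrt_le hA hε) hS hShat (norm_regInvSqrt_le hBhat hε)
    _ ≤ ‖Ahat - A‖ / (2 * ε * √ε) * M * (√ε)⁻¹
          + (√ε)⁻¹ * ‖Shat - S‖ * (√ε)⁻¹ + (√ε)⁻¹ * M * (‖Bhat - B‖ / (2 * ε * √ε)) := by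
        gcongr
        · exact norm_regInvSqrt_sub_le hA hAhat hε
        · exact norm_regInvSqrt_sub_le hB hBhat hε
    _ = M * (ε ^ 2)⁻¹ * (1 / 2) * (‖Ahat - A‖ + ‖Bhat - B‖) + ε⁻¹ * ‖Shat - S‖ := by
        linear_combination (M * (‖Ahat - A‖ + ‖Bhat - B‖) * ε⁻¹ / 2 + ‖Shat - S‖) * hsqrt
    _ ≤ M * (ε ^ 2)⁻¹ * (3 * ε ^ (-(1 / 2) : ℝ) * (lam + ε) ^ (1 / 2 : ℝ) + 1) *
          (‖Ahat - A‖ + ‖Bhat - B‖) + ε⁻¹ * ‖Shat - S‖ := by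
        gcongr
        have : 0 ≤ 3 * ε ^ (-(1 / 2) : ℝ) * (lam + ε) ^ (1 / 2 : ℝ) := by positivity
        linarith
    _ = _ := by rw [Real.rpow_neg hε.le 2, Real.rpow_two]

/-- the deterministic perturbation bound underlying Theorem 2 of the
paper. For `0 ≤ A, Â ≤ λI` on `H₂`, `0 ≤ B, B̂ ≤ λI` on `H₁`, bounded operators
`S, Ŝ : H₁ → H₂` with `‖S‖, ‖Ŝ‖ ≤ M`, and `ε > 0`:
`‖(Â + εI)^{-1/2} Ŝ (B̂ + εI)^{-1/2} − (A + εI)^{-1/2} S (B + εI)^{-1/2}‖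
  ≤ M ε^{-2} (3 ε^{-1/2} (λ + ε)^{1/2} + 1)(‖Â − A‖ + ‖B̂ − B‖) + ε^{-1} ‖Ŝ − S‖`. -/
theorem stmt5 {H₁ H₂ : Type*}
    [NormedAddCommGroup H₁] [InnerProductSpace ℂ H₁] [CompleteSpace H₁]
    [NormedAddCommGroup H₂] [InnerProductSpace ℂ H₂] [CompleteSpace H₂]
    (lam M ε : ℝ) (hlam : 0 < lam) (hM : 0 < M) (hε : 0 < ε)
    (A Ahat : H₂ →L[ℂ] H₂) (hA : A.IsPositive) (hAhat : Ahat.IsPositive)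
    (hAlam : (lam • (1 : H₂ →L[ℂ] H₂) - A).IsPositive)
    (hAhatlam : (lam • (1 : H₂ →L[ℂ] H₂) - Ahat).IsPositive)
    (B Bhat : H₁ →L[ℂ] H₁) (hB : B.IsPositive) (hBhat : Bhat.IsPositive)
    (hBlam : (lam • (1 : H₁ →L[ℂ] H₁) - B).IsPositive)
    (hBhatlam : (lam • (1 : H₁ →L[ℂ] H₁) - Bhat).IsPositive)
    (S Shat : H₁ →L[ℂ] H₂) (hS : ‖S‖ ≤ M) (hShat : ‖Shat‖ ≤ M) :
    ‖regInvSqrt Ahat ε ∘L Shat ∘L regInvSqrt Bhat ε -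
        regInvSqrt A ε ∘L S ∘L regInvSqrt B ε‖ ≤
      M * ε ^ (-(2 : ℝ)) * (3 * ε ^ (-(1 / 2) : ℝ) * (lam + ε) ^ (1 / 2 : ℝ) + 1) *
          (‖Ahat - A‖ + ‖Bhat - B‖) +
        ε⁻¹ * ‖Shat - S‖ :=
  stmt5_general lam M ε hlam hε A Ahat hA hAhat B Bhat hB hBhat S Shat hS hShat
end
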